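/- arXiv:1703.00702 — 2 statements merged into one kernel-verified Lean document; each statement's English description precedes it below -/
import Mathlib

section
/- Let k be a field and n ≥ 1 a natural number. For every matrix A ∈ GL_n(k[T,T⁻¹]) (invertible n×n matrix over the Laurent polynomial ring) there exist a matrix U ∈ GL_n(k[T,T⁻¹]) such that all entries of U and of U⁻¹ lie in the k-subalgebra of k[T,T⁻¹] generated by T⁻¹, a matrix V ∈ GL_n(k[T,T⁻¹]) such that all entries of V and of V⁻¹ lie in the k-subalgebra generated by T, and a nonincreasing sequence of integers a₁ ≥ a₂ ≥ … ≥ a_n, such that A = U · diag(T^{a₁}, …, T^{a_n}) · V. (This is the matrix form, via the standard affine cover of the projective line, of Grothendieck's theorem that every vector bundle on ℙ¹_k is a direct sum of line bundles O(a_i), equivalently of the classification of Zariski-locally trivial GL_n-torsors on ℙ¹_k.) -/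
/-!
Scaling the columns of `A` by a power of `T` gives `A = U₀ · diag(T^e)` with `U₀` over `k[T⁻¹]`,
and since `det A` is a unit `c T^d`, `det U₀ = c' T^(-m)` with `m ≥ 0`. If `m = 0`, then `U₀` is
invertible over `k[T⁻¹]`. Otherwise the constant term `U₀(T⁻¹ = 0)` is singular; pick a kernel
vector `r` and, among the columns `j` with `r j ≠ 0`, one `j₀` with `e j₀` maximal. Replacing
column `j₀` of `A` by `∑ⱼ r j T^(e j₀ - e j) Aⱼ` is a column operation over `k[T]`, and the new column is
`T^(e j₀ - 1)` times a column over `k[T⁻¹]`: the exponent `e j₀` drops by one and so does `m`.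
A permutation finally sorts the exponents.
-/

open Matrix LaurentPolynomial

namespace Matrix

variable {n R σR : Type*} [CommRing R] [SetLike σR R] [SubringClass σR R] {S : σR}

theorem permMatrix_apply_mem [DecidableEq n] (σ : Equiv.Perm n) (i j : n) :
    σ.permMatrix R i j ∈ S := by
  rw [Equiv.Perm.permMatrix, PEquiv.toMatrix_apply]
  split_ifs <;> simp

theorem mul_apply_mem_of_forall_mem [Fintype n] {M N : Matrix n n R} (hM : ∀ i j, M i j ∈ S)
    (hN : ∀ i j, N i j ∈ S) (i j : n) : (M * N) i j ∈ S :=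
  sum_mem fun l _ => mul_mem (hM i l) (hN l j)

variable [Fintype n] [DecidableEq n]

theorem det_mem_of_forall_mem {M : Matrix n n R} (hM : ∀ i j, M i j ∈ S) : M.det ∈ S := by
  have : M = (SubringClass.subtype S).mapMatrix (of fun i j => ⟨M i j, hM i j⟩) := rfl
  rw [this, ← RingHom.map_det]
  exact SetLike.coe_mem _

theorem nonsing_inv_apply_mem_of_forall_mem {M : Matrix n n R} (hM : ∀ i j, M i j ∈ S)
    (hdet : Ring.inverse M.det ∈ S) (i j : n) : M⁻¹ i j ∈ S := by
  rw [inv_def, smul_apply, smul_eq_mul, adjugate_apply]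
  refine mul_mem hdet (det_mem_of_forall_mem fun i' j' => ?_)
  rw [updateRow_apply]
  split_ifs
  · rw [Pi.single_apply]
    split_ifs <;> simp
  · exact hM i' j'

theorem det_updateCol_one (j : n) (v : n → R) : (updateCol (1 : Matrix n n R) j v).det = v j := by
  rw [← cramer_apply, cramer_one]
  rfl

namespace GeneralLinearGroup

variable (n) in
def withEntriesIn (S : Subring R) : Subgroup (GL n R) where
  carrier := {W | (∀ i j, (W : Matrix n n R) i j ∈ S) ∧ ∀ i j, (↑W⁻¹ : Matrix n n R) i j ∈ S}
  mul_mem' {V W} hV hW := by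
    refine ⟨mul_apply_mem_of_forall_mem hV.1 hW.1, ?_⟩
    rw [_root_.mul_inv_rev]
    exact mul_apply_mem_of_forall_mem hW.2 hV.2
  one_mem' := by
    rw [Set.mem_ofPred_eq, inv_one, and_self, Units.val_one]
    intro i j
    rw [one_apply]
    split_ifs <;> simp
  inv_mem' {W} hW := by simpa [and_comm] using hW

theorem exists_mem_withEntriesIn_of_det_eq_algebraMap {K : Type*} [Field K] [Algebra K R]
    {S : Subalgebra K R} {M : Matrix n n R} (hM : ∀ i j, M i j ∈ S) {c : K} (hc : c ≠ 0)
    (hdet : M.det = algebraMap K R c) :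
    ∃ W ∈ withEntriesIn n S.toSubring, (W : Matrix n n R) = M := by
  have hc' : algebraMap K R c = ((Units.mk0 c hc).map (algebraMap K R).toMonoidHom : Rˣ) := rfl
  have hunit : IsUnit M := (isUnit_iff_isUnit_det M).2 (hdet ▸ hc' ▸ Units.isUnit _)
  refine ⟨hunit.unit, ⟨hM, fun i j => ?_⟩, rfl⟩
  rw [coe_units_inv, IsUnit.unit_spec]
  refine nonsing_inv_apply_mem_of_forall_mem hM ?_ i j
  rw [hdet, hc', Ring.inverse_unit, ← map_inv]
  exact S.algebraMap_mem _

theorem toHomUnits_permMatrixHom_mem_withEntriesIn {S : Subring R} (σ : Equiv.Perm n) :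
    (permMatrixHom (R := R)).toHomUnits σ ∈ withEntriesIn n S := by
  refine ⟨permMatrix_apply_mem _, ?_⟩
  rw [← map_inv]
  exact permMatrix_apply_mem _

theorem toHomUnits_permMatrixHom_mul_diagonal_mul_inv (σ : Equiv.Perm n) (d : n → R) :
    ((permMatrixHom (R := R)).toHomUnits σ : Matrix n n R) * diagonal (fun i => d (σ i)) *
      (((permMatrixHom (R := R)).toHomUnits σ)⁻¹ : GL n R) = diagonal d := by
  rw [← map_inv, MonoidHom.coe_toHomUnits, MonoidHom.coe_toHomUnits, permMatrixHom_apply,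
    permMatrixHom_apply, inv_inv, PEquiv.toMatrix_toPEquiv_mul, PEquiv.mul_toMatrix_toPEquiv,
    submatrix_submatrix]
  simp

end GeneralLinearGroup

end Matrix

open Matrix.GeneralLinearGroup

theorem Tuple.exists_antitone_comp_perm {α : Type*} [LinearOrder α] {n : ℕ} (f : Fin n → α) :
    ∃ σ : Equiv.Perm (Fin n), Antitone (f ∘ σ) :=
  ⟨Tuple.sort (OrderDual.toDual ∘ f), Tuple.monotone_sort (OrderDual.toDual ∘ f)⟩

namespace LaurentPolynomial

section Semiring

variable {R : Type*} [Semiring R]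

theorem coeff_T_mul (n : ℤ) (p : R[T;T⁻¹]) (m : ℤ) : (T n * p).coeff m = p.coeff (m - n) := by
  rw [T, AddMonoidAlgebra.coeff_single_mul_apply, one_mul, sub_eq_neg_add]

theorem coeff_mul_T (p : R[T;T⁻¹]) (n m : ℤ) : (p * T n).coeff m = p.coeff (m - n) := by
  rw [T, AddMonoidAlgebra.coeff_mul_single_apply, mul_one, sub_eq_add_neg]

theorem coeff_mul_C (p : R[T;T⁻¹]) (r : R) (m : ℤ) : (p * C r).coeff m = p.coeff m * r := by
  rw [← single_eq_C, AddMonoidAlgebra.coeff_mul_single_apply, neg_zero, add_zero]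

theorem coeff_C_mul_T (r : R) (n m : ℤ) : (C r * T n).coeff m = if n = m then r else 0 := by
  rw [← single_eq_C_mul_T, AddMonoidAlgebra.coeff_single, Finsupp.single_apply]

theorem coeff_toLaurent_natCast (f : Polynomial R) (n : ℕ) :
    (Polynomial.toLaurent f).coeff n = f.coeff n :=
  Finsupp.mapDomain_apply Nat.cast_injective _ n

theorem coeff_toLaurent_of_neg (f : Polynomial R) {m : ℤ} (hm : m < 0) :
    (Polynomial.toLaurent f).coeff m = 0 :=
  Finsupp.mapDomain_of_notMem_range _ _ fun ⟨n, hn⟩ => by simp at hn; omega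

theorem toLaurent_trunc (p : R[T;T⁻¹]) (h : ∀ m < 0, p.coeff m = 0) :
    Polynomial.toLaurent (trunc p) = p := by
  ext m
  rcases lt_or_ge m 0 with hm | hm
  · rw [coeff_toLaurent_of_neg _ hm, h m hm]
  · lift m to ℕ using hm
    exact coeff_toLaurent_natCast _ m

end Semiring

section CommSemiring

variable {R : Type*} [CommSemiring R]

theorem adjoin_T_one_eq_range :
    Algebra.adjoin R {(T 1 : R[T;T⁻¹])} = Polynomial.toLaurentAlg.range := by
  rw [Algebra.adjoin_singleton_eq_range_aeval]
  congr 1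
  ext
  simp

theorem mem_adjoin_T_one_iff {p : R[T;T⁻¹]} :
    p ∈ Algebra.adjoin R {T 1} ↔ ∀ m < 0, p.coeff m = 0 := by
  rw [adjoin_T_one_eq_range]
  refine ⟨?_, fun h => ⟨trunc p, toLaurent_trunc p h⟩⟩
  rintro ⟨f, rfl⟩ m hm
  exact coeff_toLaurent_of_neg f hm

theorem C_mul_T_mem_adjoin_T_one {r : R} {m : ℤ} (h : r ≠ 0 → 0 ≤ m) :
    C r * T m ∈ Algebra.adjoin R {T 1} := by
  refine mem_adjoin_T_one_iff.2 fun l hl => ?_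
  rw [coeff_C_mul_T, ite_eq_right_iff]
  exact fun hml => by_contra fun hr => by linarith [h hr]

theorem adjoin_T_neg_one_eq_map_invert :
    Algebra.adjoin R {(T (-1) : R[T;T⁻¹])} = (Algebra.adjoin R {T 1}).map invert.toAlgHom := by
  rw [← Algebra.adjoin_image, Set.image_singleton]
  simp

theorem mem_adjoin_T_neg_one_iff {p : R[T;T⁻¹]} :
    p ∈ Algebra.adjoin R {T (-1)} ↔ ∀ m, 0 < m → p.coeff m = 0 := by
  rw [adjoin_T_neg_one_eq_map_invert, Subalgebra.mem_map]
  constructor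
  · rintro ⟨q, hq, rfl⟩ m hm
    simpa using mem_adjoin_T_one_iff.1 hq (-m) (by omega)
  · refine fun h => ⟨invert p, mem_adjoin_T_one_iff.2 fun m hm => ?_, ?_⟩
    · simpa using h (-m) (by omega)
    · simp [involutive_invert p]

theorem coeff_zero_mul_of_mem_adjoin_T_neg_one {p q : R[T;T⁻¹]}
    (hp : p ∈ Algebra.adjoin R {T (-1)}) (hq : q ∈ Algebra.adjoin R {T (-1)}) :
    (p * q).coeff 0 = p.coeff 0 * q.coeff 0 := by
  have hpoly : ∀ r ∈ Algebra.adjoin R {T (-1)},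
      Polynomial.toLaurent (trunc (invert r)) = invert r := fun r hr =>
    toLaurent_trunc _ fun m hm => by simpa using mem_adjoin_T_neg_one_iff.1 hr (-m) (by omega)
  have hcoeff : ∀ r : R[T;T⁻¹], r.coeff 0 = (invert r).coeff ((0 : ℕ) : ℤ) := by simp
  rw [hcoeff, hcoeff p, hcoeff q, map_mul, ← hpoly p hp, ← hpoly q hq, ← map_mul,
    coeff_toLaurent_natCast, coeff_toLaurent_natCast, coeff_toLaurent_natCast,
    Polynomial.mul_coeff_zero]

noncomputable def coeffZeroHom : Algebra.adjoin R {(T (-1) : R[T;T⁻¹])} →+* R where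
  toFun p := (p : R[T;T⁻¹]).coeff 0
  map_one' := by simp [← T_zero]
  map_mul' p q := coeff_zero_mul_of_mem_adjoin_T_neg_one p.2 q.2
  map_zero' := rfl
  map_add' p q := by simp

theorem T_one_mul_mem_adjoin_T_neg_one {p : R[T;T⁻¹]} (hp : p ∈ Algebra.adjoin R {T (-1)})
    (h0 : p.coeff 0 = 0) : T 1 * p ∈ Algebra.adjoin R {T (-1)} := by
  refine mem_adjoin_T_neg_one_iff.2 fun m hm => ?_
  rw [coeff_T_mul]
  rcases eq_or_lt_of_le (show 1 ≤ m by omega) with rfl | hm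
  · exact h0
  · exact mem_adjoin_T_neg_one_iff.1 hp _ (by omega)

theorem eventually_mul_T_neg_mem_adjoin_T_neg_one (p : R[T;T⁻¹]) :
    ∀ᶠ E in Filter.atTop, p * T (-E) ∈ Algebra.adjoin R {T (-1)} := by
  obtain ⟨E₀, hE₀⟩ := p.coeff.support.exists_le
  filter_upwards [Filter.eventually_ge_atTop E₀] with E hE
  refine mem_adjoin_T_neg_one_iff.2 fun m hm => ?_
  rw [coeff_mul_T, ← Finsupp.notMem_support_iff]
  exact fun hmem => by linarith [hE₀ _ hmem]

end CommSemiring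

theorem coeff_zero_det {R n : Type*} [CommRing R] [Fintype n] [DecidableEq n]
    {U : Matrix n n R[T;T⁻¹]}
    (hU : ∀ i j, U i j ∈ Algebra.adjoin R {T (-1)}) :
    U.det.coeff 0 = (U.map (·.coeff 0)).det := by
  have hU' : U = (Algebra.adjoin R {T (-1)}).val.toRingHom.mapMatrix
      (of fun i j => ⟨U i j, hU i j⟩) := rfl
  rw [hU', ← RingHom.map_det]
  exact RingHom.map_det (coeffZeroHom (R := R)) _

theorem _root_.IsUnit.exists_eq_C_mul_T {R : Type*} [CommRing R] [IsDomain R] {p : R[T;T⁻¹]}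
    (hp : IsUnit p) : ∃ c : R, IsUnit c ∧ ∃ n : ℤ, p = C c * T n := by
  obtain ⟨q, hpq⟩ := hp.exists_right_inv
  obtain ⟨a, f, hf⟩ := exists_T_pow p
  obtain ⟨b, g, hg⟩ := exists_T_pow q
  have hfg : f * g = Polynomial.X ^ (a + b) := Polynomial.toLaurent_injective <| by
    rw [map_mul, hf, hg, Polynomial.toLaurent_X_pow, mul_mul_mul_comm, hpq, one_mul, ← T_add]
    push_cast
    rfl
  obtain ⟨i, -, hi⟩ := (dvd_prime_pow Polynomial.prime_X _).1 (Dvd.intro g hfg)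
  obtain ⟨u, hu⟩ := hi.symm
  obtain ⟨c, hc, hcu⟩ := Polynomial.isUnit_iff.1 u.isUnit
  refine ⟨c, hc, i - a, ?_⟩
  rw [← mul_one p, ← T_zero, ← sub_self (a : ℤ), T_sub, ← mul_assoc, ← hf, ← hu, ← hcu, map_mul,
    Polynomial.toLaurent_X_pow, Polynomial.toLaurent_C, T_sub, mul_comm (T (i : ℤ)), mul_assoc]

variable {k n : Type*} [Field k] [Fintype n]

theorem mulVec_C_mul_T_one_mem_adjoin_T_neg_one {R : Type*} [CommRing R]
    {U : Matrix n n R[T;T⁻¹]} (hU : ∀ i j, U i j ∈ Algebra.adjoin R {T (-1)}) {r : n → R}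
    (hr : U.map (·.coeff 0) *ᵥ r = 0) (i : n) :
    (U *ᵥ fun l => C (r l) * T 1) i ∈ Algebra.adjoin R {T (-1)} := by
  have : (U *ᵥ fun l => C (r l) * T 1) i = T 1 * ∑ l, U i l * C (r l) := by
    simp only [mulVec, dotProduct, Finset.mul_sum]
    exact Finset.sum_congr rfl fun l _ => by ring
  rw [this]
  refine T_one_mul_mem_adjoin_T_neg_one
    (Subalgebra.sum_mem _ fun l _ => Subalgebra.mul_mem _ (hU i l) ?_) ?_
  · rw [C_eq_algebraMap]
    exact Subalgebra.algebraMap_mem _ _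
  · simpa [mulVec, dotProduct, AddMonoidAlgebra.coeff_sum, coeff_mul_C] using congrFun hr i

variable [DecidableEq n]

theorem diagonal_T_mul_updateCol_one {R : Type*} [CommSemiring R] (e : n → ℤ) (j₀ : n)
    (r : n → R) :
    diagonal (fun i => T (e i)) * updateCol 1 j₀ (fun i => C (r i) * T (e j₀ - e i)) =
      updateCol 1 j₀ (fun i => C (r i) * T 1) *
        diagonal (fun i => T (Function.update e j₀ (e j₀ - 1) i)) := by
  refine Matrix.ext fun i j => ?_
  simp only [diagonal_mul, mul_diagonal, updateCol_apply, one_apply]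
  split_ifs with h h'
  · rw [h, Function.update_self, mul_left_comm, ← T_add, mul_assoc, ← T_add]
    congr 2
    ring
  · rw [h', Function.update_of_ne h, mul_one, one_mul]
  · rw [mul_zero, zero_mul]

theorem exists_mul_diagonal_mul_eq_of_det_map_coeff_zero_eq_zero {U : Matrix n n k[T;T⁻¹]}
    (hU : ∀ i j, U i j ∈ Algebra.adjoin k {T (-1)}) (hL : (U.map (·.coeff 0)).det = 0)
    (e : n → ℤ) :
    ∃ W ∈ withEntriesIn n (Algebra.adjoin k {(T 1 : k[T;T⁻¹])}).toSubring,
      ∃ U' : Matrix n n k[T;T⁻¹], (∀ i j, U' i j ∈ Algebra.adjoin k {T (-1)}) ∧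
      (∃ c ≠ 0, U'.det = U.det * (C c * T 1)) ∧ ∃ e' : n → ℤ,
        U * diagonal (fun i => T (e i)) * (W : Matrix n n k[T;T⁻¹]) =
          U' * diagonal (fun i => T (e' i)) := by
  classical
  obtain ⟨r, hr0, hr⟩ := exists_mulVec_eq_zero_iff.2 hL
  obtain ⟨j₀, hj₀, hmax⟩ := Finset.exists_max_image {j | r j ≠ 0} e <| by
    obtain ⟨j, hj⟩ := Function.ne_iff.1 hr0
    exact ⟨j, by simpa using hj⟩
  simp only [Finset.mem_filter, Finset.mem_univ, true_and] at hj₀ hmax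
  have hWent : ∀ i j, updateCol (1 : Matrix n n k[T;T⁻¹]) j₀
      (fun i => C (r i) * T (e j₀ - e i)) i j ∈ Algebra.adjoin k {T 1} := by
    intro i j
    rw [updateCol_apply, one_apply]
    split_ifs
    · exact C_mul_T_mem_adjoin_T_one fun hri => by linarith [hmax i hri]
    all_goals simp
  obtain ⟨W, hW, hWM⟩ := exists_mem_withEntriesIn_of_det_eq_algebraMap hWent hj₀ <| by
    rw [det_updateCol_one, sub_self, T_zero, mul_one, C_eq_algebraMap]
  refine ⟨W, hW, U * updateCol 1 j₀ (fun i => C (r i) * T 1), fun i j => ?_,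
    ⟨r j₀, hj₀, by rw [det_mul, det_updateCol_one]⟩, Function.update e j₀ (e j₀ - 1), ?_⟩
  · rw [mul_updateCol, Matrix.mul_one, updateCol_apply]
    split_ifs
    · exact mulVec_C_mul_T_one_mem_adjoin_T_neg_one hU hr i
    · exact hU i j
  · rw [Matrix.mul_assoc, hWM, diagonal_T_mul_updateCol_one, Matrix.mul_assoc]

theorem exists_mul_diagonal_mul_eq_of_det_eq_C_mul_T (m : ℕ) {U : Matrix n n k[T;T⁻¹]} {c : k}
    (hU : ∀ i j, U i j ∈ Algebra.adjoin k {T (-1)}) (hc : c ≠ 0) (hdet : U.det = C c * T (-m))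
    (e : n → ℤ) :
    ∃ W ∈ withEntriesIn n (Algebra.adjoin k {(T 1 : k[T;T⁻¹])}).toSubring,
      ∃ U' ∈ withEntriesIn n (Algebra.adjoin k {(T (-1) : k[T;T⁻¹])}).toSubring, ∃ e' : n → ℤ,
        U * diagonal (fun i => T (e i)) * (W : Matrix n n k[T;T⁻¹]) =
          (U' : Matrix n n k[T;T⁻¹]) * diagonal (fun i => T (e' i)) := by
  induction m generalizing U c e with
  | zero =>
    obtain ⟨U', hU', rfl⟩ := exists_mem_withEntriesIn_of_det_eq_algebraMap hU hc <| by
      rw [hdet, Nat.cast_zero, neg_zero, T_zero, mul_one, C_eq_algebraMap]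
    exact ⟨1, one_mem _, U', hU', e, by rw [Units.val_one, Matrix.mul_one]⟩
  | succ m ih =>
    have hL : (U.map (·.coeff 0)).det = 0 := by
      rw [← coeff_zero_det hU, hdet, coeff_C_mul_T, if_neg (by omega)]
    obtain ⟨W₁, hW₁, U₁, hU₁, ⟨c₁, hc₁, hdet₁⟩, e₁, h₁⟩ :=
      exists_mul_diagonal_mul_eq_of_det_map_coeff_zero_eq_zero hU hL e
    obtain ⟨W₂, hW₂, U₂, hU₂, e₂, h₂⟩ := ih hU₁ (mul_ne_zero hc hc₁) (by
      rw [hdet₁, hdet, map_mul, show -(m : ℤ) = -((m + 1 : ℕ) : ℤ) + 1 by push_cast; ring, T_add]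
      ring) e₁
    exact ⟨W₁ * W₂, mul_mem hW₁ hW₂, U₂, hU₂, e₂, by rw [Units.val_mul, ← Matrix.mul_assoc, h₁, h₂]⟩

theorem exists_mul_eq_mul_diagonal (A : GL n k[T;T⁻¹]) :
    ∃ W ∈ withEntriesIn n (Algebra.adjoin k {(T 1 : k[T;T⁻¹])}).toSubring,
      ∃ U ∈ withEntriesIn n (Algebra.adjoin k {(T (-1) : k[T;T⁻¹])}).toSubring, ∃ e : n → ℤ,
        (A : Matrix n n k[T;T⁻¹]) * (W : Matrix n n k[T;T⁻¹]) =
          (U : Matrix n n k[T;T⁻¹]) * diagonal (fun i => T (e i)) := by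
  obtain ⟨E, hE⟩ := (Filter.eventually_all.2 fun i => Filter.eventually_all.2 fun j =>
    eventually_mul_T_neg_mem_adjoin_T_neg_one ((A : Matrix n n k[T;T⁻¹]) i j)).exists
  set U₀ := (A : Matrix n n k[T;T⁻¹]) * diagonal (fun _ => T (-E)) with hU₀_def
  have hU₀ : ∀ i j, U₀ i j ∈ Algebra.adjoin k {T (-1)} := by simpa [U₀, mul_diagonal] using hE
  have hunit : IsUnit U₀ := A.isUnit.mul (isUnit_diagonal.2 (Pi.isUnit_iff.2 fun _ => isUnit_T _))
  obtain ⟨c, hc, d, hd⟩ := ((isUnit_iff_isUnit_det _).1 hunit).exists_eq_C_mul_T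
  have hd0 : d ≤ 0 := by
    by_contra! hd0
    have := mem_adjoin_T_neg_one_iff.1 (det_mem_of_forall_mem hU₀) d hd0
    rw [hd, coeff_C_mul_T, if_pos rfl] at this
    exact hc.ne_zero this
  obtain ⟨W, hW, U, hU, e, h⟩ := exists_mul_diagonal_mul_eq_of_det_eq_C_mul_T (-d).toNat hU₀
    hc.ne_zero (by rw [hd, Int.toNat_of_nonneg (by omega), neg_neg]) (fun _ => E)
  refine ⟨W, hW, U, hU, e, ?_⟩
  rw [← h, hU₀_def, Matrix.mul_assoc (A : Matrix n n k[T;T⁻¹]), diagonal_mul_diagonal]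
  simp only [← T_add, neg_add_cancel, T_zero, diagonal_one, Matrix.mul_one]

end LaurentPolynomial

theorem birkhoff_grothendieck_laurentPolynomial_exists_general
    (k : Type*) [Field k] (n : ℕ)
    (A : GL (Fin n) (LaurentPolynomial k)) :
    ∃ (U V : GL (Fin n) (LaurentPolynomial k)) (a : Fin n → ℤ),
      (∀ i j : Fin n, (U : Matrix (Fin n) (Fin n) (LaurentPolynomial k)) i j ∈
        Algebra.adjoin k {(T (-1) : LaurentPolynomial k)}) ∧
      (∀ i j : Fin n, ((U⁻¹ : GL (Fin n) (LaurentPolynomial k)) :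
          Matrix (Fin n) (Fin n) (LaurentPolynomial k)) i j ∈
        Algebra.adjoin k {(T (-1) : LaurentPolynomial k)}) ∧
      (∀ i j : Fin n, (V : Matrix (Fin n) (Fin n) (LaurentPolynomial k)) i j ∈
        Algebra.adjoin k {(T 1 : LaurentPolynomial k)}) ∧
      (∀ i j : Fin n, ((V⁻¹ : GL (Fin n) (LaurentPolynomial k)) :
          Matrix (Fin n) (Fin n) (LaurentPolynomial k)) i j ∈
        Algebra.adjoin k {(T 1 : LaurentPolynomial k)}) ∧
      Antitone a ∧
      (A : Matrix (Fin n) (Fin n) (LaurentPolynomial k)) =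
        (U : Matrix (Fin n) (Fin n) (LaurentPolynomial k)) *
          Matrix.diagonal (fun i => (T (a i) : LaurentPolynomial k)) *
          (V : Matrix (Fin n) (Fin n) (LaurentPolynomial k)) := by
  obtain ⟨W, hW, U, hU, e, hAWU⟩ := exists_mul_eq_mul_diagonal A
  obtain ⟨σ, hσ⟩ := Tuple.exists_antitone_comp_perm e
  have hconj := toHomUnits_permMatrixHom_mul_diagonal_mul_inv σ (fun i => T (e i) : _ → k[T;T⁻¹])
  set P := (permMatrixHom (R := k[T;T⁻¹])).toHomUnits σ
  have hUP := mul_mem hU (toHomUnits_permMatrixHom_mem_withEntriesIn σ)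
  have hPW := mul_mem (inv_mem (toHomUnits_permMatrixHom_mem_withEntriesIn σ)) (inv_mem hW)
  refine ⟨U * P, P⁻¹ * W⁻¹, e ∘ σ, hUP.1, hUP.2, hPW.1, hPW.2, hσ, ?_⟩
  calc (A : Matrix (Fin n) (Fin n) k[T;T⁻¹])
      = ↑U * diagonal (fun i => T (e i)) * ↑W⁻¹ := by
        rw [← hAWU, Matrix.mul_assoc, ← Units.val_mul, mul_inv_cancel, Units.val_one,
          Matrix.mul_one]
    _ = ↑U * (↑P * diagonal (fun i => T (e (σ i))) * ↑P⁻¹) * ↑W⁻¹ := by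
        rw [hconj]
    _ = _ := by simp only [Units.val_mul, Matrix.mul_assoc, Function.comp_apply]

/-- **Birkhoff–Grothendieck factorization over Laurent polynomials.**
Every invertible matrix over `k[T,T⁻¹]` factors as `U * diag(T^aᵢ) * V` with `U, U⁻¹`
having entries in the subalgebra generated by `T⁻¹`, `V, V⁻¹` having entries in the
subalgebra generated by `T`, and `a` a nonincreasing sequence of integers. -/
theorem birkhoff_grothendieck_laurentPolynomial_exists
    (k : Type*) [Field k] (n : ℕ) (hn : 1 ≤ n)
    (A : GL (Fin n) (LaurentPolynomial k)) :
    ∃ (U V : GL (Fin n) (LaurentPolynomial k)) (a : Fin n → ℤ),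
      (∀ i j : Fin n, (U : Matrix (Fin n) (Fin n) (LaurentPolynomial k)) i j ∈
        Algebra.adjoin k {(T (-1) : LaurentPolynomial k)}) ∧
      (∀ i j : Fin n, ((U⁻¹ : GL (Fin n) (LaurentPolynomial k)) :
          Matrix (Fin n) (Fin n) (LaurentPolynomial k)) i j ∈
        Algebra.adjoin k {(T (-1) : LaurentPolynomial k)}) ∧
      (∀ i j : Fin n, (V : Matrix (Fin n) (Fin n) (LaurentPolynomial k)) i j ∈
        Algebra.adjoin k {(T 1 : LaurentPolynomial k)}) ∧
      (∀ i j : Fin n, ((V⁻¹ : GL (Fin n) (LaurentPolynomial k)) :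
          Matrix (Fin n) (Fin n) (LaurentPolynomial k)) i j ∈
        Algebra.adjoin k {(T 1 : LaurentPolynomial k)}) ∧
      Antitone a ∧
      (A : Matrix (Fin n) (Fin n) (LaurentPolynomial k)) =
        (U : Matrix (Fin n) (Fin n) (LaurentPolynomial k)) *
          Matrix.diagonal (fun i => (T (a i) : LaurentPolynomial k)) *
          (V : Matrix (Fin n) (Fin n) (LaurentPolynomial k)) :=
  birkhoff_grothendieck_laurentPolynomial_exists_general k n A
end

section
/- Let k be a field and n ≥ 1 a natural number. Suppose a matrix A ∈ GL_n(k[T,T⁻¹]) admits two factorizations A = U · diag(T^{a₁}, …, T^{a_n}) · V = U′ · diag(T^{b₁}, …, T^{b_n}) · V′, where a₁ ≥ … ≥ a_n and b₁ ≥ … ≥ b_n are nonincreasing sequences of integers, U and U′ (together with their inverses) have entries in the k-subalgebra of k[T,T⁻¹] generated by T⁻¹, and V and V′ (together with their inverses) have entries in the k-subalgebra generated by T. Then a_i = b_i for all i = 1, …, n. (Uniqueness of the splitting type in the Birkhoff–Grothendieck factorization over Laurent polynomials.) -/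
/-!
Write `M = U'⁻¹ U` (entries in `k[T⁻¹]`) and `N = V' V⁻¹` (entries in `k[T]`, invertible).
Then `M · diag(T^aⱼ) = diag(T^bᵢ) · N`, i.e. `Mᵢⱼ T^aⱼ = T^bᵢ Nᵢⱼ`; the left side only has
monomials of degree `≤ aⱼ` and the right side only of degree `≥ bᵢ`, so `Nᵢⱼ = 0` whenever
`aⱼ < bᵢ`. For a threshold `t`, the rows `{i | t ≤ bᵢ}` of the invertible matrix `N` are then
supported on the columns `{j | t ≤ aⱼ}`, so `#{i | t ≤ bᵢ} ≤ #{j | t ≤ aⱼ}`. By symmetry these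
counts agree for every `t`, and a nonincreasing sequence is determined by them.
-/

open Matrix LaurentPolynomial

namespace LaurentPolynomial

theorem mem_multiples_of_mem_adjoin_T {R : Type*} [CommSemiring R] {d : ℤ}
    {p : R[T;T⁻¹]} (hp : p ∈ Algebra.adjoin R {T d}) {m : ℤ} (hm : p.coeff m ≠ 0) :
    m ∈ AddSubmonoid.multiples d := by
  induction hp using Algebra.adjoin_induction generalizing m with
  | mem x hx =>
    rw [Set.mem_singleton_iff.mp hx, T_apply, ite_ne_right_iff] at hm
    exact hm.1 ▸ AddSubmonoid.mem_multiples d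
  | algebraMap r =>
    rw [← C_eq_algebraMap, C_apply, ite_ne_right_iff] at hm
    exact hm.1 ▸ zero_mem _
  | add x y _ _ ihx ihy =>
    rw [AddMonoidAlgebra.coeff_add, Finsupp.add_apply] at hm
    by_cases hx : x.coeff m = 0
    · exact ihy (by simpa [hx] using hm)
    · exact ihx hx
  | mul x y _ _ ihx ihy =>
    obtain ⟨u, hu, v, hv, rfl⟩ := Finset.mem_add.mp
      (AddMonoidAlgebra.support_coeff_mul_subset x y (Finsupp.mem_support_iff.mpr hm))
    exact add_mem (ihx (Finsupp.mem_support_iff.mp hu)) (ihy (Finsupp.mem_support_iff.mp hv))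

theorem eq_zero_of_mul_T_eq_T_mul {R : Type*} [CommSemiring R] {p q : R[T;T⁻¹]} {a b : ℤ}
    (hp : p ∈ Algebra.adjoin R {T (-1)}) (hq : q ∈ Algebra.adjoin R {T 1})
    (h : p * T a = T b * q) (hab : a < b) : q = 0 := by
  ext m
  by_contra hm
  have hcoeff : p.coeff (b + m - a) = q.coeff m := by
    have := congrArg (fun r : R[T;T⁻¹] => r.coeff (b + m)) h
    rwa [T, T, AddMonoidAlgebra.coeff_mul_single_apply, AddMonoidAlgebra.coeff_single_mul_apply,
      mul_one, one_mul, neg_add_cancel_left, ← sub_eq_add_neg] at this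
  obtain ⟨i, hi⟩ := mem_multiples_of_mem_adjoin_T hq hm
  obtain ⟨j, hj⟩ := mem_multiples_of_mem_adjoin_T hp (hcoeff ▸ hm)
  simp only [nsmul_eq_mul, mul_one, mul_neg] at hi hj
  omega

end LaurentPolynomial

theorem Matrix.card_le_card_of_isUnit_of_apply_eq_zero {R ι : Type*} [CommRing R] [Nontrivial R]
    [Fintype ι] [DecidableEq ι] {M : Matrix ι ι R} (hM : IsUnit M) {s t : Finset ι}
    (h : ∀ i ∈ s, ∀ j ∉ t, M i j = 0) : s.card ≤ t.card := by
  have hrows : (fun i : s => M i) =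
      Function.ExtendByZero.linearMap R ((↑) : t → ι) ∘ fun i : s => fun j : t => M i j := by
    ext i j
    by_cases hj : j ∈ t
    · simp only [Function.comp_apply, Function.ExtendByZero.linearMap_apply]
      exact (Subtype.val_injective.extend_apply (fun j : t => M i j) 0 (⟨j, hj⟩ : t)).symm
    · simp only [Function.comp_apply, Function.ExtendByZero.linearMap_apply]
      rw [Function.extend_apply' _ _ _ fun ⟨j', hj'⟩ => hj (hj' ▸ j'.2), h i i.2 j hj,
        Pi.zero_apply]
  have hli : LinearIndependent R fun i : s => fun j : t => M i j := by
    refine LinearIndependent.of_comp (Function.ExtendByZero.linearMap R ((↑) : t → ι)) ?_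
    rw [← hrows]
    exact (linearIndependent_rows_of_isUnit hM).comp _ Subtype.val_injective
  simpa using hli.fintype_card_le_finrank

section SplittingType

open Finset

variable {R ι : Type*} [CommRing R] [Nontrivial R] [Fintype ι] [DecidableEq ι]

theorem card_le_card_of_mul_diagonal_T_eq_diagonal_T_mul {M N : Matrix ι ι R[T;T⁻¹]}
    (hM : M ∈ (Algebra.adjoin R {T (-1)}).matrix) (hN : N ∈ (Algebra.adjoin R {T 1}).matrix)
    (hNunit : IsUnit N) {a b : ι → ℤ}
    (h : M * diagonal (fun j => T (a j)) = diagonal (fun i => T (b i)) * N) (t : ℤ) :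
    #{i | t ≤ b i} ≤ #{j | t ≤ a j} := by
  refine card_le_card_of_isUnit_of_apply_eq_zero hNunit fun i hi j hj => ?_
  simp only [Finset.mem_filter, Finset.mem_univ, true_and, not_le] at hi hj
  have hij := congrFun (congrFun h i) j
  rw [mul_diagonal, diagonal_mul] at hij
  exact eq_zero_of_mul_T_eq_T_mul (hM i j) (hN i j) hij (hj.trans_le hi)

theorem card_le_card_of_mul_diagonal_T_mul_eq {U V U' V' : GL ι R[T;T⁻¹]}
    (hU : (U : Matrix ι ι R[T;T⁻¹]) ∈ (Algebra.adjoin R {T (-1)}).matrix)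
    (hU'inv : ((U'⁻¹ : GL ι R[T;T⁻¹]) : Matrix ι ι R[T;T⁻¹]) ∈ (Algebra.adjoin R {T (-1)}).matrix)
    (hV' : (V' : Matrix ι ι R[T;T⁻¹]) ∈ (Algebra.adjoin R {T 1}).matrix)
    (hVinv : ((V⁻¹ : GL ι R[T;T⁻¹]) : Matrix ι ι R[T;T⁻¹]) ∈ (Algebra.adjoin R {T 1}).matrix)
    {a b : ι → ℤ}
    (h : (U : Matrix ι ι R[T;T⁻¹]) * diagonal (fun i => T (a i)) * (V : Matrix ι ι R[T;T⁻¹]) =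
      (U' : Matrix ι ι R[T;T⁻¹]) * diagonal (fun i => T (b i)) * (V' : Matrix ι ι R[T;T⁻¹]))
    (t : ℤ) :
    #{i | t ≤ b i} ≤ #{j | t ≤ a j} := by
  refine card_le_card_of_mul_diagonal_T_eq_diagonal_T_mul (mul_mem hU'inv hU) (mul_mem hV' hVinv)
    (V' * V⁻¹).isUnit ?_ t
  calc _ = ((U'⁻¹ : GL ι R[T;T⁻¹]) : Matrix ι ι R[T;T⁻¹]) *
        ((U : Matrix ι ι R[T;T⁻¹]) * diagonal (fun i => T (a i)) * (V : Matrix ι ι R[T;T⁻¹])) *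
        ((V⁻¹ : GL ι R[T;T⁻¹]) : Matrix ι ι R[T;T⁻¹]) := by
        simp [mul_assoc]
    _ = _ := by rw [h]; simp [mul_assoc]

theorem Antitone.le_iff_lt_card_filter_le {α : Type*} [LinearOrder α] {n : ℕ} {a : Fin n → α}
    (ha : Antitone a) (i : Fin n) (t : α) : t ≤ a i ↔ (i : ℕ) < #{j | t ≤ a j} := by
  constructor
  · intro hi
    calc (i : ℕ) < #(Finset.Iic i) := by simp
      _ ≤ _ := Finset.card_le_card fun j hj => by
        simpa using hi.trans (ha (Finset.mem_Iic.mp hj))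
  · intro hi
    by_contra! hlt
    have : #{j | t ≤ a j} ≤ #(Finset.Iio i) := Finset.card_le_card fun j hj => by
      simp only [Finset.mem_filter, Finset.mem_univ, true_and] at hj
      exact Finset.mem_Iio.mpr (lt_of_not_ge fun hij => (hlt.trans_le' (ha hij)).not_ge hj)
    rw [Fin.card_Iio] at this
    omega

theorem Antitone.le_of_forall_card_filter_le {α : Type*} [LinearOrder α] {n : ℕ}
    {a b : Fin n → α} (ha : Antitone a) (hb : Antitone b)
    (h : ∀ t, #{j | t ≤ b j} ≤ #{j | t ≤ a j}) : b ≤ a := fun i =>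
  (ha.le_iff_lt_card_filter_le i (b i)).2 <|
    ((hb.le_iff_lt_card_filter_le i (b i)).1 le_rfl).trans_le (h (b i))

end SplittingType

theorem birkhoff_grothendieck_laurentPolynomial_unique_general
    (k : Type*) [Field k] (n : ℕ)
    (A U V U' V' : GL (Fin n) (LaurentPolynomial k)) (a b : Fin n → ℤ)
    (ha : Antitone a) (hb : Antitone b)
    (hU : ∀ i j : Fin n, (U : Matrix (Fin n) (Fin n) (LaurentPolynomial k)) i j ∈
      Algebra.adjoin k {(T (-1) : LaurentPolynomial k)})
    (hUinv : ∀ i j : Fin n, ((U⁻¹ : GL (Fin n) (LaurentPolynomial k)) :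
        Matrix (Fin n) (Fin n) (LaurentPolynomial k)) i j ∈
      Algebra.adjoin k {(T (-1) : LaurentPolynomial k)})
    (hU' : ∀ i j : Fin n, (U' : Matrix (Fin n) (Fin n) (LaurentPolynomial k)) i j ∈
      Algebra.adjoin k {(T (-1) : LaurentPolynomial k)})
    (hU'inv : ∀ i j : Fin n, ((U'⁻¹ : GL (Fin n) (LaurentPolynomial k)) :
        Matrix (Fin n) (Fin n) (LaurentPolynomial k)) i j ∈
      Algebra.adjoin k {(T (-1) : LaurentPolynomial k)})
    (hV : ∀ i j : Fin n, (V : Matrix (Fin n) (Fin n) (LaurentPolynomial k)) i j ∈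
      Algebra.adjoin k {(T 1 : LaurentPolynomial k)})
    (hVinv : ∀ i j : Fin n, ((V⁻¹ : GL (Fin n) (LaurentPolynomial k)) :
        Matrix (Fin n) (Fin n) (LaurentPolynomial k)) i j ∈
      Algebra.adjoin k {(T 1 : LaurentPolynomial k)})
    (hV' : ∀ i j : Fin n, (V' : Matrix (Fin n) (Fin n) (LaurentPolynomial k)) i j ∈
      Algebra.adjoin k {(T 1 : LaurentPolynomial k)})
    (hV'inv : ∀ i j : Fin n, ((V'⁻¹ : GL (Fin n) (LaurentPolynomial k)) :
        Matrix (Fin n) (Fin n) (LaurentPolynomial k)) i j ∈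
      Algebra.adjoin k {(T 1 : LaurentPolynomial k)})
    (hfac : (A : Matrix (Fin n) (Fin n) (LaurentPolynomial k)) =
      (U : Matrix (Fin n) (Fin n) (LaurentPolynomial k)) *
        Matrix.diagonal (fun i => (T (a i) : LaurentPolynomial k)) *
        (V : Matrix (Fin n) (Fin n) (LaurentPolynomial k)))
    (hfac' : (A : Matrix (Fin n) (Fin n) (LaurentPolynomial k)) =
      (U' : Matrix (Fin n) (Fin n) (LaurentPolynomial k)) *
        Matrix.diagonal (fun i => (T (b i) : LaurentPolynomial k)) *
        (V' : Matrix (Fin n) (Fin n) (LaurentPolynomial k))) :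
    ∀ i : Fin n, a i = b i := by
  intro i
  have hfac_eq := hfac.symm.trans hfac'
  exact le_antisymm
    (hb.le_of_forall_card_filter_le ha
      (card_le_card_of_mul_diagonal_T_mul_eq hU' hUinv hV hV'inv hfac_eq.symm) i)
    (ha.le_of_forall_card_filter_le hb
      (card_le_card_of_mul_diagonal_T_mul_eq hU hU'inv hV' hVinv hfac_eq) i)

/-- **Uniqueness of the splitting type in the Birkhoff–Grothendieck factorization
over Laurent polynomials.** If an invertible matrix over `k[T,T⁻¹]` admits two
factorizations `U * diag(T^aᵢ) * V = U' * diag(T^bᵢ) * V'` with nonincreasing exponent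
sequences, where `U, U', U⁻¹, U'⁻¹` have entries in the subalgebra generated by `T⁻¹` and
`V, V', V⁻¹, V'⁻¹` have entries in the subalgebra generated by `T`, then `a = b`. -/
theorem birkhoff_grothendieck_laurentPolynomial_unique
    (k : Type*) [Field k] (n : ℕ) (hn : 1 ≤ n)
    (A U V U' V' : GL (Fin n) (LaurentPolynomial k)) (a b : Fin n → ℤ)
    (ha : Antitone a) (hb : Antitone b)
    (hU : ∀ i j : Fin n, (U : Matrix (Fin n) (Fin n) (LaurentPolynomial k)) i j ∈
      Algebra.adjoin k {(T (-1) : LaurentPolynomial k)})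
    (hUinv : ∀ i j : Fin n, ((U⁻¹ : GL (Fin n) (LaurentPolynomial k)) :
        Matrix (Fin n) (Fin n) (LaurentPolynomial k)) i j ∈
      Algebra.adjoin k {(T (-1) : LaurentPolynomial k)})
    (hU' : ∀ i j : Fin n, (U' : Matrix (Fin n) (Fin n) (LaurentPolynomial k)) i j ∈
      Algebra.adjoin k {(T (-1) : LaurentPolynomial k)})
    (hU'inv : ∀ i j : Fin n, ((U'⁻¹ : GL (Fin n) (LaurentPolynomial k)) :
        Matrix (Fin n) (Fin n) (LaurentPolynomial k)) i j ∈
      Algebra.adjoin k {(T (-1) : LaurentPolynomial k)})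
    (hV : ∀ i j : Fin n, (V : Matrix (Fin n) (Fin n) (LaurentPolynomial k)) i j ∈
      Algebra.adjoin k {(T 1 : LaurentPolynomial k)})
    (hVinv : ∀ i j : Fin n, ((V⁻¹ : GL (Fin n) (LaurentPolynomial k)) :
        Matrix (Fin n) (Fin n) (LaurentPolynomial k)) i j ∈
      Algebra.adjoin k {(T 1 : LaurentPolynomial k)})
    (hV' : ∀ i j : Fin n, (V' : Matrix (Fin n) (Fin n) (LaurentPolynomial k)) i j ∈
      Algebra.adjoin k {(T 1 : LaurentPolynomial k)})
    (hV'inv : ∀ i j : Fin n, ((V'⁻¹ : GL (Fin n) (LaurentPolynomial k)) :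
        Matrix (Fin n) (Fin n) (LaurentPolynomial k)) i j ∈
      Algebra.adjoin k {(T 1 : LaurentPolynomial k)})
    (hfac : (A : Matrix (Fin n) (Fin n) (LaurentPolynomial k)) =
      (U : Matrix (Fin n) (Fin n) (LaurentPolynomial k)) *
        Matrix.diagonal (fun i => (T (a i) : LaurentPolynomial k)) *
        (V : Matrix (Fin n) (Fin n) (LaurentPolynomial k)))
    (hfac' : (A : Matrix (Fin n) (Fin n) (LaurentPolynomial k)) =
      (U' : Matrix (Fin n) (Fin n) (LaurentPolynomial k)) *
        Matrix.diagonal (fun i => (T (b i) : LaurentPolynomial k)) *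
        (V' : Matrix (Fin n) (Fin n) (LaurentPolynomial k))) :
    ∀ i : Fin n, a i = b i :=
  birkhoff_grothendieck_laurentPolynomial_unique_general k n A U V U' V' a b ha hb hU hUinv hU'
    hU'inv hV hVinv hV' hV'inv hfac hfac'
end
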